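/- Let G be a Lie group with closed subgroup H, and suppose G, H, and Z = G/H carry compatible invariant measures (so that Weil's integration formula holds). Let U ⊆ G and D ⊆ H be open sets, and let z₀ = eH be the base point. Then vol_Z(U·z₀) · vol_H(D) ≤ vol_G(U·D), where U·D = {ud : u ∈ U, d ∈ D} ⊆ G. -/

import Mathlib

open MeasureTheory
open scoped Pointwise

/-!
By Weil's formula, `vol_G (U * D)` is the `μZ`-integral over `z` of the `μH`-measure of the fiber
`{h | z.out * h ∈ U * D}`. When `z ∈ U · z₀`, the representative `z.out` lies in `u H` for some
`u ∈ U`, so this fiber contains a left translate of `D`, which has measure `μH D` by invariance.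
-/

namespace QuotientGroup

variable {G : Type*} [Group G] {H : Subgroup G}

theorem measurableSet_image_mk_of_isOpen [TopologicalSpace G] [ContinuousConstSMul Gᵐᵒᵖ G]
    [MeasurableSpace G] [OpensMeasurableSpace G] {U : Set G} (hU : IsOpen U) :
    MeasurableSet (mk '' U : Set (G ⧸ H)) := by
  rw [measurableSet_quotient]
  exact (preimage_image_mk_eq_mul H U ▸ hU.mul_right).measurableSet

theorem measure_le_measure_preimage_mul_mul_image [MeasurableSpace H] {μH : Measure H}
    (hHinv : ∀ h : H, MeasurePreserving (fun x : H => h * x) μH μH)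
    {D : Set H} (hD : NullMeasurableSet D μH) {U : Set G} {g : G}
    (hg : (g : G ⧸ H) ∈ mk '' U) :
    μH D ≤ μH ((fun h : H => g * h) ⁻¹' (U * Subtype.val '' D)) := by
  obtain ⟨u, hu, hug⟩ := hg
  let h₀ : H := ⟨u⁻¹ * g, QuotientGroup.eq.mp hug⟩
  calc μH D = μH ((fun x : H => h₀ * x) ⁻¹' D) := ((hHinv h₀).measure_preimage hD).symm
    _ ≤ _ := measure_mono fun h hh =>
        show g * (h : G) ∈ U * Subtype.val '' D from
          Set.mem_mul.mpr ⟨u, hu, (h₀ * h : H), ⟨_, hh, rfl⟩, by simp [h₀, mul_assoc]⟩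

end QuotientGroup

theorem measure_eq_lintegral_measure_fiber_of_weil {G : Type*} [Group G] [MeasurableSpace G]
    [MeasurableMul G] {H : Subgroup G}
    {μG : Measure G} {μH : Measure H} {μZ : Measure (G ⧸ H)}
    (hWeil : ∀ f : G → ENNReal, Measurable f →
      ∫⁻ g, f g ∂μG = ∫⁻ z, (∫⁻ h : H, f ((Quotient.out z : G) * (h : G)) ∂μH) ∂μZ)
    {S : Set G} (hS : MeasurableSet S) :
    μG S = ∫⁻ z, μH ((fun h : H => (Quotient.out z : G) * h) ⁻¹' S) ∂μZ := by
  rw [← lintegral_indicator_one hS, hWeil _ (measurable_one.indicator hS)]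
  refine lintegral_congr fun z => ?_
  have hfiber : MeasurableSet ((fun h : H => (Quotient.out z : G) * h) ⁻¹' S) :=
    hS.preimage ((measurable_const_mul _).comp measurable_subtype_coe)
  simp_rw [← Set.indicator_comp_right (fun h : H => (Quotient.out z : G) * h) (g := 1)]
  exact lintegral_indicator_one hfiber

theorem quotient_volume_mul_le_general
    {G : Type*} [Group G] [TopologicalSpace G] [IsTopologicalGroup G]
    [MeasurableSpace G] [BorelSpace G]
    (H : Subgroup G)
    (μG : Measure G) (μH : Measure (H : Subgroup G)) (μZ : Measure (G ⧸ H))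
    -- invariance of the measures
    (hHinv : ∀ h : H, MeasurePreserving (fun x : H => h * x) μH μH)
    -- Weil's integration formula
    (hWeil : ∀ f : G → ENNReal, Measurable f →
      ∫⁻ g, f g ∂μG =
        ∫⁻ z, (∫⁻ h : H, f ((Quotient.out z : G) * (h : G)) ∂μH) ∂μZ)
    (U : Set G) (hU : IsOpen U) (D : Set H) (hD : IsOpen D) :
    μZ (QuotientGroup.mk '' U) * μH D ≤ μG (U * (Subtype.val '' D)) := by
  let fiber : G ⧸ H → ENNReal := fun z =>
    μH ((fun h : H => (Quotient.out z : G) * h) ⁻¹' (U * Subtype.val '' D))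
  calc μZ (QuotientGroup.mk '' U) * μH D = ∫⁻ _ in QuotientGroup.mk '' U, μH D ∂μZ := by
        rw [setLIntegral_const, mul_comm]
    _ ≤ ∫⁻ z in QuotientGroup.mk '' U, fiber z ∂μZ :=
        setLIntegral_mono' (QuotientGroup.measurableSet_image_mk_of_isOpen hU) fun z hz =>
          QuotientGroup.measure_le_measure_preimage_mul_mul_image hHinv
            hD.measurableSet.nullMeasurableSet (by rwa [QuotientGroup.out_eq'])
    _ ≤ ∫⁻ z, fiber z ∂μZ := setLIntegral_le_lintegral _ _
    _ = μG (U * Subtype.val '' D) :=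
        (measure_eq_lintegral_measure_fiber_of_weil hWeil hU.mul_right.measurableSet).symm

/-- Let `G` be a (unimodular) group with closed subgroup `H`, and suppose `G`, `H` and
`Z = G / H` carry compatible invariant measures, in the sense that Weil's integration formula
`∫_G f = ∫_Z ∫_H f(g h) dμ_H(h) dμ_Z(gH)` holds (with a measurable choice of section given by
`Quotient.out`).  Then for open sets `U ⊆ G` and `D ⊆ H`,
`vol_Z (U · z₀) * vol_H (D) ≤ vol_G (U · D)`. -/
theorem quotient_volume_mul_le
    {G : Type*} [Group G] [TopologicalSpace G] [IsTopologicalGroup G]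
    [MeasurableSpace G] [BorelSpace G]
    (H : Subgroup G)
    (μG : Measure G) (μH : Measure (H : Subgroup G)) (μZ : Measure (G ⧸ H))
    -- invariance of the measures
    (hGinv : ∀ g : G, MeasurePreserving (fun x : G => g * x) μG μG)
    (hHinv : ∀ h : H, MeasurePreserving (fun x : H => h * x) μH μH)
    (hZinv : ∀ g : G, MeasurePreserving (fun z : G ⧸ H => g • z) μZ μZ)
    -- Weil's integration formula
    (hWeil : ∀ f : G → ENNReal, Measurable f →
      ∫⁻ g, f g ∂μG =
        ∫⁻ z, (∫⁻ h : H, f ((Quotient.out z : G) * (h : G)) ∂μH) ∂μZ)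
    (U : Set G) (hU : IsOpen U) (D : Set H) (hD : IsOpen D) :
    μZ (QuotientGroup.mk '' U) * μH D ≤ μG (U * (Subtype.val '' D)) :=
  quotient_volume_mul_le_general H μG μH μZ hHinv hWeil U hU D hD
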